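/- Let d ≥ 2 and n ≥ 2 be integers, N = n^d, let x^α = α/n for α ∈ {0,…,n−1}^d be the uniform grid of [0,1]^d, and let {y^α}_{α ∈ {0,…,n−1}^d} be arbitrary points of ℝ^d. Set c = max_α ‖y^α − x^α‖₂ + n^{−1}. Then for every ε > 0 there exists a bijection G : ℝ^d → ℝ^d such that ‖G(x^α) − y^α‖₂ < ε for every α, and both G and G^{−1} are Lipschitz (Euclidean norm) with Lipschitz constant at most (n/(n−1))·(1 + 6Nc)·(1 + 2Nε)·(1 + 6Nε^{−1}c). -/

import Mathlib

open scoped NNReal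

/-!
`G` is a composition of three additive coupling layers `x ↦ x + φ (P x)`, where `P` projects onto
the first coordinate axis or onto its orthogonal complement and `φ` takes values in `ker P`.
Such a layer is inverted by subtracting `φ (P x)`, so both it and its inverse are
`(1 + Lip φ)`-Lipschitz. A layer can move finitely many points whose `P`-parts are
`δ`-separated by shifts of norm at most `C`, taking for `φ` a sum of tents of radius `δ / 2`
around the `P`-parts, which is `2C/δ`-Lipschitz.

The first layer shifts the first coordinate of `x^α` by less than `1/n` so that the `N` grid
points get first coordinates `code(α)/N`, pairwise `1/N` apart. The second layer, keyed on the
first coordinate, moves the other coordinates to those of `y^α`, the second one perturbed by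
distinct multiples of `ε/(3N)` so that the targets become `ε/(3N)`-separated. The third layer,
keyed on the other coordinates, corrects the first one; the only error left is the
perturbation, which is below `ε/3`. With `M = max ‖y^α - x^α‖` the three layers cost `3`,
`1 + 2N(M + ε/3)` and `1 + 6Nc/ε`, and their product is at most the stated constant.
-/

/-- The uniform grid point `x^α = α/n` of `[0,1]^d`. -/
noncomputable def gridPoint (d n : ℕ) (α : Fin d → Fin n) : EuclideanSpace ℝ (Fin d) :=
  WithLp.toLp 2 (fun i => (α i : ℝ) / n)

section Tent

variable {X E : Type*} [PseudoMetricSpace X] [NormedAddCommGroup E] [NormedSpace ℝ E]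

noncomputable def tent (δ : ℝ) (p x : X) : ℝ := max (1 - 2 / δ * dist x p) 0

lemma tent_nonneg (δ : ℝ) (p x : X) : 0 ≤ tent δ p x := le_max_right _ _

lemma tent_self (δ : ℝ) (p : X) : tent δ p p = 1 := by simp [tent]

lemma tent_eq_zero {δ : ℝ} (hδ : 0 < δ) {p x : X} (h : δ / 2 ≤ dist x p) : tent δ p x = 0 := by
  have : 1 ≤ 2 / δ * dist x p := by
    rw [div_mul_eq_mul_div, le_div_iff₀ hδ]
    linarith
  exact max_eq_right (by linarith)

lemma tent_eq_of_ne_zero {δ : ℝ} {p x : X} (h : tent δ p x ≠ 0) :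
    tent δ p x = 1 - 2 / δ * dist x p :=
  (max_choice _ _).resolve_right h

lemma abs_tent_sub_tent_le {δ : ℝ} (hδ : 0 ≤ δ) (p x y : X) :
    |tent δ p x - tent δ p y| ≤ 2 / δ * dist x y := by
  calc |tent δ p x - tent δ p y|
      ≤ |(1 - 2 / δ * dist x p) - (1 - 2 / δ * dist y p)| := abs_max_sub_max_le_abs _ _ _
    _ = |2 / δ * (dist y p - dist x p)| := by congr 1; ring
    _ = 2 / δ * |dist y p - dist x p| := by rw [abs_mul, abs_of_nonneg (by positivity)]
    _ ≤ 2 / δ * dist x y := by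
        gcongr; rw [abs_sub_comm]; exact abs_dist_sub_le x y p

lemma tent_eq_zero_of_tent_ne_zero {δ : ℝ} (hδ : 0 < δ) {p q x : X} (hpq : δ ≤ dist p q)
    (h : tent δ p x ≠ 0) : tent δ q x = 0 := by
  refine tent_eq_zero hδ ?_
  have hxp : dist x p < δ / 2 := by
    by_contra! hle
    exact h (tent_eq_zero hδ hle)
  linarith [dist_triangle_left p q x]

lemma tent_add_tent_le {δ : ℝ} (hδ : 0 < δ) {p q x y : X} (hpq : δ ≤ dist p q)
    (hx : tent δ q x = 0) (hy : tent δ p y = 0) :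
    tent δ p x + tent δ q y ≤ 2 / δ * dist x y := by
  have hp := abs_tent_sub_tent_le hδ.le p x y
  have hq := abs_tent_sub_tent_le hδ.le q y x
  rw [hy, sub_zero, abs_of_nonneg (tent_nonneg _ _ _)] at hp
  rw [hx, sub_zero, abs_of_nonneg (tent_nonneg _ _ _), dist_comm] at hq
  by_cases hpx : tent δ p x = 0
  · linarith
  by_cases hqy : tent δ q y = 0
  · linarith
  rw [tent_eq_of_ne_zero hpx, tent_eq_of_ne_zero hqy]
  have hsum : δ ≤ dist x p + dist x y + dist y q := by
    linarith [dist_triangle4 p x y q, dist_comm x p]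
  have : 2 / δ * δ ≤ 2 / δ * (dist x p + dist x y + dist y q) := by gcongr
  rw [div_mul_cancel₀ _ hδ.ne'] at this
  linarith

noncomputable def tentSum (δ : ℝ) (s : Finset X) (f : X → E) (x : X) : E :=
  ∑ p ∈ s, tent δ p x • f p

variable {δ : ℝ} {s : Finset X} {f : X → E}

lemma tentSum_eq_smul {p x : X} (hp : p ∈ s) (h : ∀ q ∈ s, q ≠ p → tent δ q x = 0) :
    tentSum δ s f x = tent δ p x • f p :=
  Finset.sum_eq_single_of_mem p hp fun q hq hqp => by rw [h q hq hqp, zero_smul]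

lemma tentSum_eq_zero {x : X} (h : ∀ q ∈ s, tent δ q x = 0) : tentSum δ s f x = 0 :=
  Finset.sum_eq_zero fun q hq => by rw [h q hq, zero_smul]

lemma tentSum_eq_smul_of_tent_ne_zero (hδ : 0 < δ)
    (hs : (s : Set X).Pairwise fun p q => δ ≤ dist p q) {p x : X} (hp : p ∈ s)
    (h : tent δ p x ≠ 0) :
    tentSum δ s f x = tent δ p x • f p :=
  tentSum_eq_smul hp fun _ hq hqp => tent_eq_zero_of_tent_ne_zero hδ (hs hp hq hqp.symm) h

lemma tentSum_apply_of_mem (hδ : 0 < δ)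
    (hs : (s : Set X).Pairwise fun p q => δ ≤ dist p q) {p : X} (hp : p ∈ s) :
    tentSum δ s f p = f p := by
  rw [tentSum_eq_smul_of_tent_ne_zero hδ hs hp (by simp [tent_self]), tent_self, one_smul]

lemma norm_tentSum_sub_le_of_tent_ne_zero (hδ : 0 < δ)
    (hs : (s : Set X).Pairwise fun p q => δ ≤ dist p q) {C : ℝ} (hC : ∀ p ∈ s, ‖f p‖ ≤ C)
    {p x : X} (hp : p ∈ s) (hpx : tent δ p x ≠ 0) (y : X) :
    ‖tentSum δ s f x - tentSum δ s f y‖ ≤ 2 / δ * C * dist x y := by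
  have hC0 : 0 ≤ C := (norm_nonneg _).trans (hC p hp)
  rw [tentSum_eq_smul_of_tent_ne_zero hδ hs hp hpx]
  by_cases hq : ∃ q ∈ s, q ≠ p ∧ tent δ q y ≠ 0
  · obtain ⟨q, hqs, hqp, hqy⟩ := hq
    rw [tentSum_eq_smul_of_tent_ne_zero hδ hs hqs hqy]
    have hsum := tent_add_tent_le hδ (hs hp hqs hqp.symm)
      (tent_eq_zero_of_tent_ne_zero hδ (hs hp hqs hqp.symm) hpx)
      (tent_eq_zero_of_tent_ne_zero hδ (hs hqs hp hqp) hqy)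
    calc ‖tent δ p x • f p - tent δ q y • f q‖
        ≤ tent δ p x * ‖f p‖ + tent δ q y * ‖f q‖ := by
          refine (norm_sub_le _ _).trans_eq ?_
          rw [norm_smul, norm_smul, Real.norm_of_nonneg (tent_nonneg _ _ _),
            Real.norm_of_nonneg (tent_nonneg _ _ _)]
      _ ≤ (tent δ p x + tent δ q y) * C := by
          rw [add_mul]
          gcongr
          exacts [tent_nonneg _ _ _, hC p hp, tent_nonneg _ _ _, hC q hqs]
      _ ≤ 2 / δ * C * dist x y := by nlinarith
  · push Not at hq
    rw [tentSum_eq_smul hp hq, ← sub_smul, norm_smul, Real.norm_eq_abs]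
    calc |tent δ p x - tent δ p y| * ‖f p‖ ≤ 2 / δ * dist x y * C :=
          mul_le_mul (abs_tent_sub_tent_le hδ.le p x y) (hC p hp) (norm_nonneg _)
            (by positivity)
      _ = 2 / δ * C * dist x y := by ring

lemma lipschitzWith_tentSum (hδ : 0 < δ)
    (hs : (s : Set X).Pairwise fun p q => δ ≤ dist p q) {C : ℝ} (hC0 : 0 ≤ C)
    (hC : ∀ p ∈ s, ‖f p‖ ≤ C) :
    LipschitzWith (2 / δ * C).toNNReal (tentSum δ s f) := by
  refine LipschitzWith.of_dist_le_mul fun x y => ?_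
  rw [Real.coe_toNNReal _ (by positivity), dist_eq_norm]
  by_cases hx : ∃ p ∈ s, tent δ p x ≠ 0
  · obtain ⟨p, hp, hpx⟩ := hx
    exact norm_tentSum_sub_le_of_tent_ne_zero hδ hs hC hp hpx y
  by_cases hy : ∃ p ∈ s, tent δ p y ≠ 0
  · obtain ⟨p, hp, hpy⟩ := hy
    rw [norm_sub_rev, dist_comm]
    exact norm_tentSum_sub_le_of_tent_ne_zero hδ hs hC hp hpy x
  push Not at hx hy
  rw [tentSum_eq_zero hx, tentSum_eq_zero hy, sub_zero, norm_zero]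
  positivity

end Tent

section Coupling

variable {E : Type*} [NormedAddCommGroup E] [NormedSpace ℝ E]

def couplingEquiv (P : E →ₗ[ℝ] E) (φ : E → E) (hφ : ∀ x, P (φ x) = 0) : E ≃ E where
  toFun x := x + φ (P x)
  invFun x := x - φ (P x)
  left_inv x := by simp [hφ]
  right_inv x := by simp [hφ]

variable {P : E →ₗ[ℝ] E} {φ : E → E} {hφ : ∀ x, P (φ x) = 0}

@[simp]
lemma couplingEquiv_apply (x : E) : couplingEquiv P φ hφ x = x + φ (P x) := rfl

lemma lipschitzWith_couplingEquiv (hP : ∀ x, ‖P x‖ ≤ ‖x‖) {K : ℝ≥0} (hφK : LipschitzWith K φ) :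
    LipschitzWith (1 + K) (couplingEquiv P φ hφ) := by
  have h := LipschitzWith.id.add (hφK.comp (AddMonoidHomClass.lipschitz_of_bound P 1
    (by simpa using hP)))
  rwa [Real.toNNReal_one, mul_one] at h

lemma lipschitzWith_couplingEquiv_symm (hP : ∀ x, ‖P x‖ ≤ ‖x‖) {K : ℝ≥0}
    (hφK : LipschitzWith K φ) : LipschitzWith (1 + K) (couplingEquiv P φ hφ).symm := by
  have h := LipschitzWith.id.sub (hφK.comp (AddMonoidHomClass.lipschitz_of_bound P 1
    (by simpa using hP)))
  rwa [Real.toNNReal_one, mul_one] at h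

end Coupling

lemma Pairwise.injective_of_le_dist {ι X : Type*} [MetricSpace X] {p : ι → X} {δ : ℝ}
    (hδ : 0 < δ) (h : Pairwise fun a b => δ ≤ dist (p a) (p b)) : Function.Injective p :=
  fun a b hab => by_contra fun hne => by linarith [h hne, dist_le_zero.2 hab]

section BiLipschitz

variable {α β γ : Type*} [PseudoEMetricSpace α] [PseudoEMetricSpace β] [PseudoEMetricSpace γ]

def BiLipschitzWith (K : ℝ≥0) (e : α ≃ β) : Prop :=
  LipschitzWith K e ∧ LipschitzWith K e.symm

lemma BiLipschitzWith.trans {K₁ K₂ : ℝ≥0} {e₁ : α ≃ β} {e₂ : β ≃ γ} (h₁ : BiLipschitzWith K₁ e₁)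
    (h₂ : BiLipschitzWith K₂ e₂) : BiLipschitzWith (K₂ * K₁) (e₁.trans e₂) :=
  ⟨h₂.1.comp h₁.1, mul_comm K₁ K₂ ▸ h₁.2.comp h₂.2⟩

lemma BiLipschitzWith.weaken {K K' : ℝ≥0} {e : α ≃ β} (h : BiLipschitzWith K e) (hK : K ≤ K') :
    BiLipschitzWith K' e :=
  ⟨h.1.weaken hK, h.2.weaken hK⟩

end BiLipschitz

section Interpolation

variable {E ι : Type*} [NormedAddCommGroup E] [NormedSpace ℝ E] [Fintype ι]

theorem exists_couplingLayer_interpolating (P : E →ₗ[ℝ] E) (hP : ∀ x, ‖P x‖ ≤ ‖x‖)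
    (u z : ι → E) {δ C : ℝ} (hδ : 0 < δ) (hC : 0 ≤ C)
    (hsep : ∀ a b, P (u a) ≠ P (u b) → δ ≤ dist (P (u a)) (P (u b)))
    (hcons : ∀ a b, P (u a) = P (u b) → z a - u a = z b - u b)
    (hPz : ∀ a, P (z a) = P (u a)) (hzu : ∀ a, ‖z a - u a‖ ≤ C) :
    ∃ T : E ≃ E, BiLipschitzWith (1 + 2 / δ * C).toNNReal T ∧ ∀ a, T (u a) = z a := by
  classical
  set s := Finset.univ.image fun a => P (u a)
  set f := Function.extend (fun a => P (u a)) (fun a => z a - u a) 0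
  have hf : ∀ a, f (P (u a)) = z a - u a := Function.FactorsThrough.extend_apply hcons 0
  have hs : (s : Set E).Pairwise fun p q => δ ≤ dist p q := by
    simp only [s, Finset.coe_image, Finset.coe_univ, Set.image_univ]
    rintro _ ⟨a, rfl⟩ _ ⟨b, rfl⟩ hne
    exact hsep a b hne
  have hfC : ∀ q ∈ s, ‖f q‖ ≤ C := by
    simp only [s, Finset.mem_image, Finset.mem_univ, true_and]
    rintro _ ⟨a, rfl⟩
    rw [hf]
    exact hzu a
  have hφ : ∀ x, P (tentSum δ s f x) = 0 := by
    intro x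
    refine (map_sum P _ _).trans (Finset.sum_eq_zero fun q hq => ?_)
    simp only [s, Finset.mem_image, Finset.mem_univ, true_and] at hq
    obtain ⟨a, rfl⟩ := hq
    rw [map_smul, hf, map_sub, hPz, sub_self, smul_zero]
  have hφK := lipschitzWith_tentSum hδ hs hC hfC
  refine ⟨couplingEquiv P (tentSum δ s f) hφ, ?_, fun a => ?_⟩
  · rw [Real.toNNReal_add zero_le_one (by positivity), Real.toNNReal_one]
    exact ⟨lipschitzWith_couplingEquiv hP hφK, lipschitzWith_couplingEquiv_symm hP hφK⟩
  · rw [couplingEquiv_apply, tentSum_apply_of_mem hδ hs (Finset.mem_image_of_mem _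
      (Finset.mem_univ a)), hf, add_sub_cancel]

theorem exists_couplingLayer_interpolating_of_pairwise (P : E →ₗ[ℝ] E)
    (hP : ∀ x, ‖P x‖ ≤ ‖x‖) (u z : ι → E) {δ C : ℝ} (hδ : 0 < δ) (hC : 0 ≤ C)
    (hsep : Pairwise fun a b => δ ≤ dist (P (u a)) (P (u b)))
    (hPz : ∀ a, P (z a) = P (u a)) (hzu : ∀ a, ‖z a - u a‖ ≤ C) :
    ∃ T : E ≃ E, BiLipschitzWith (1 + 2 / δ * C).toNNReal T ∧ ∀ a, T (u a) = z a :=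
  exists_couplingLayer_interpolating P hP u z hδ hC
    (fun _ _ h => hsep (ne_of_apply_ne (fun a => P (u a)) h))
    (fun _ _ h => by rw [hsep.injective_of_le_dist hδ h]) hPz hzu

/-- The first layer, along `P`, keeps the `P`-part of `u a` and replaces its `(1 - P)`-part by
that of `z a`; the second, along `1 - P`, then replaces the `P`-part. -/
theorem exists_biLipschitz_interpolating (P : E →ₗ[ℝ] E) (hPP : ∀ x, P (P x) = P x)
    (hP : ∀ x, ‖P x‖ ≤ ‖x‖) (hP' : ∀ x, ‖x - P x‖ ≤ ‖x‖) (u z : ι → E) {δ₁ δ₂ C₁ C₂ : ℝ}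
    (hδ₁ : 0 < δ₁) (hδ₂ : 0 < δ₂) (hC₁ : 0 ≤ C₁) (hC₂ : 0 ≤ C₂)
    (hu : Pairwise fun a b => δ₁ ≤ dist (P (u a)) (P (u b)))
    (hz : Pairwise fun a b => δ₂ ≤ dist (z a - P (z a)) (z b - P (z b)))
    (huz₁ : ∀ a, ‖(z a - u a) - P (z a - u a)‖ ≤ C₁) (huz₂ : ∀ a, ‖P (z a - u a)‖ ≤ C₂) :
    ∃ T : E ≃ E, BiLipschitzWith ((1 + 2 / δ₂ * C₂) * (1 + 2 / δ₁ * C₁)).toNNReal T ∧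
      ∀ a, T (u a) = z a := by
  set w : ι → E := fun a => P (u a) + (z a - P (z a))
  obtain ⟨T₁, hT₁, hT₁u⟩ := exists_couplingLayer_interpolating_of_pairwise P hP u w hδ₁ hC₁ hu
    (fun a => by simp [w, hPP]) (fun a => by convert huz₁ a using 2; simp only [w, map_sub]; abel)
  obtain ⟨T₂, hT₂, hT₂w⟩ := exists_couplingLayer_interpolating_of_pairwise (LinearMap.id - P) hP'
    w z hδ₂ hC₂ (by simpa [w, hPP] using hz) (fun a => by simp [w, hPP])
    (fun a => by convert huz₂ a using 2; simp only [w, map_sub]; abel)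
  refine ⟨T₁.trans T₂, ?_, fun a => by simp [hT₁u, hT₂w]⟩
  rw [Real.toNNReal_mul (by positivity)]
  exact hT₁.trans hT₂

end Interpolation

section Coordinates

variable {ι : Type*} [DecidableEq ι]

noncomputable def coordProj (i : ι) : EuclideanSpace ℝ ι →ₗ[ℝ] EuclideanSpace ℝ ι where
  toFun x := EuclideanSpace.single i (x i)
  map_add' x y := by simp [← PiLp.single_add]
  map_smul' c x := by ext j; by_cases h : j = i <;> simp [h]

@[simp]
lemma coordProj_apply (i : ι) (x : EuclideanSpace ℝ ι) :
    coordProj i x = EuclideanSpace.single i (x i) := rfl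

lemma coordProj_coordProj (i : ι) (x : EuclideanSpace ℝ ι) :
    coordProj i (coordProj i x) = coordProj i x := by
  simp

lemma norm_coordProj_le [Fintype ι] (i : ι) (x : EuclideanSpace ℝ ι) : ‖coordProj i x‖ ≤ ‖x‖ := by
  rw [coordProj_apply, PiLp.norm_single]
  exact PiLp.norm_apply_le x i

lemma sub_coordProj_apply (i j : ι) (x : EuclideanSpace ℝ ι) :
    (x - coordProj i x) j = if j = i then 0 else x j := by
  by_cases h : j = i <;> simp [h]

lemma norm_sub_coordProj_le [Fintype ι] (i : ι) (x : EuclideanSpace ℝ ι) :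
    ‖x - coordProj i x‖ ≤ ‖x‖ := by
  rw [EuclideanSpace.norm_eq, EuclideanSpace.norm_eq]
  gcongr with j
  rw [sub_coordProj_apply]
  split_ifs <;> simp

end Coordinates

lemma abs_sub_apply_le_dist {ι : Type*} [Fintype ι] (x y : EuclideanSpace ℝ ι) (i : ι) :
    |x i - y i| ≤ dist x y :=
  (Real.dist_eq _ _).symm.trans_le (PiLp.dist_apply_le x y i)

lemma one_div_le_abs_natCast_div_sub {a b : ℕ} {K : ℝ} (hK : 0 < K) (h : a ≠ b) :
    1 / K ≤ |(a : ℝ) / K - b / K| := by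
  have : (1 : ℤ) ≤ |(a : ℤ) - b| := Int.one_le_abs (sub_ne_zero.2 (by exact_mod_cast h))
  rw [← sub_div, abs_div, abs_of_pos hK]
  gcongr
  exact_mod_cast this

theorem exists_rank_add_mul_separated {ι : Type*} [Fintype ι] (f : ι → ℝ) {δ : ℝ} (hδ : 0 ≤ δ) :
    ∃ k : ι → ℕ, (∀ a, k a < Fintype.card ι) ∧
      Pairwise fun a b => δ ≤ |(f a + k a * δ) - (f b + k b * δ)| := by
  let e₀ := Fintype.equivFin ι
  let e : ι ≃ Fin (Fintype.card ι) := e₀.trans (Tuple.sort (f ∘ e₀.symm)).symm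
  have hmono : Monotone (f ∘ e.symm) := Tuple.monotone_sort (f ∘ e₀.symm)
  have key : ∀ a b, e a < e b → δ ≤ (f b + (e b : ℕ) * δ) - (f a + (e a : ℕ) * δ) := by
    intro a b h
    have hf : f a ≤ f b := by simpa using hmono h.le
    have hk : ((e a : ℕ) : ℝ) + 1 ≤ (e b : ℕ) := by exact_mod_cast h
    nlinarith
  refine ⟨fun a => e a, fun a => (e a).isLt, fun a b hab => ?_⟩
  rcases lt_or_gt_of_ne (e.injective.ne hab) with h | h
  · rw [abs_sub_comm]
    exact (key a b h).trans (le_abs_self _)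
  · exact (key b a h).trans (le_abs_self _)

section Grid

variable {m n : ℕ}

/-- The base-`n` code of a grid index with `α 0` as its most significant digit. -/
def gridCode : (Fin (m + 1) → Fin n) ≃ Fin (n * n ^ m) :=
  ((Fin.consEquiv fun _ => Fin n).symm.trans ((Equiv.refl _).prodCongr finFunctionFinEquiv)).trans
    finProdFinEquiv

lemma gridCode_val (α : Fin (m + 1) → Fin n) :
    (gridCode α : ℕ) = finFunctionFinEquiv (Fin.tail α) + n ^ m * α 0 := by
  simp [gridCode, Fin.consEquiv, Fin.tail]

noncomputable def gridShift (α : Fin (m + 1) → Fin n) : ℝ :=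
  (finFunctionFinEquiv (Fin.tail α) : ℝ) / (n : ℝ) ^ (m + 1)

lemma gridShift_nonneg (α : Fin (m + 1) → Fin n) : 0 ≤ gridShift α := by
  unfold gridShift; positivity

lemma gridShift_le (α : Fin (m + 1) → Fin n) : gridShift α ≤ 1 / n := by
  have hn : (0 : ℝ) < n := by exact_mod_cast (α 0).pos
  have : (finFunctionFinEquiv (Fin.tail α) : ℝ) ≤ (n : ℝ) ^ m := by
    exact_mod_cast (finFunctionFinEquiv (Fin.tail α)).isLt.le
  rw [gridShift, div_le_div_iff₀ (by positivity) hn, pow_succ]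
  nlinarith

lemma gridPoint_zero_add_gridShift (α : Fin (m + 1) → Fin n) :
    gridPoint (m + 1) n α 0 + gridShift α = (gridCode α : ℝ) / (n : ℝ) ^ (m + 1) := by
  have hn : (n : ℝ) ≠ 0 := by exact_mod_cast (α 0).pos.ne'
  rw [gridCode_val, gridShift, gridPoint]
  push_cast
  field_simp
  ring

theorem exists_biLipschitz_gridPoint_add_gridShift (hn : 0 < n) :
    ∃ T : EuclideanSpace ℝ (Fin (m + 1)) ≃ EuclideanSpace ℝ (Fin (m + 1)), BiLipschitzWith 3 T ∧
      ∀ α, T (gridPoint (m + 1) n α) =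
        gridPoint (m + 1) n α + EuclideanSpace.single 0 (gridShift α) := by
  have hn' : (0 : ℝ) < n := by exact_mod_cast hn
  set Q : EuclideanSpace ℝ (Fin (m + 1)) →ₗ[ℝ] EuclideanSpace ℝ (Fin (m + 1)) :=
    LinearMap.id - coordProj 0
  have hQ : ∀ x j, Q x j = if j = 0 then 0 else x j := fun x j => sub_coordProj_apply 0 j x
  have hsep : ∀ α β, Q (gridPoint (m + 1) n α) ≠ Q (gridPoint (m + 1) n β) →
      1 / n ≤ dist (Q (gridPoint (m + 1) n α)) (Q (gridPoint (m + 1) n β)) := by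
    intro α β hne
    obtain ⟨j, hj⟩ : ∃ j, Q (gridPoint (m + 1) n α) j ≠ Q (gridPoint (m + 1) n β) j := by
      by_contra! h
      exact hne (PiLp.ext h)
    refine le_trans ?_ (abs_sub_apply_le_dist _ _ j)
    rw [hQ, hQ] at hj ⊢
    split_ifs at hj ⊢
    · exact absurd rfl hj
    · exact one_div_le_abs_natCast_div_sub hn' fun h => hj (by simp [gridPoint, h])
  have hcons : ∀ α β, Q (gridPoint (m + 1) n α) = Q (gridPoint (m + 1) n β) →
      gridShift α = gridShift β := by
    intro α β h
    have htail : Fin.tail α = Fin.tail β := by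
      funext j
      have := congrArg (· j.succ) h
      simp only [hQ, Fin.succ_ne_zero, if_false, gridPoint] at this
      exact Fin.ext (by exact_mod_cast (div_left_inj' hn'.ne').1 this)
    simp [gridShift, htail]
  have hQsingle : ∀ r, Q (EuclideanSpace.single 0 r) = 0 := by
    intro r
    ext j
    rw [hQ]
    split_ifs with h <;> simp [h]
  obtain ⟨T, hT, hTx⟩ := exists_couplingLayer_interpolating Q
    (norm_sub_coordProj_le 0) (gridPoint (m + 1) n)
    (fun α => gridPoint (m + 1) n α + EuclideanSpace.single 0 (gridShift α))
    (one_div_pos.2 hn') (one_div_pos.2 hn').le hsep (fun α β h => by simp [hcons α β h])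
    (fun α => by rw [map_add, hQsingle, add_zero]) (fun α => by
      rw [add_sub_cancel_left, PiLp.norm_single, Real.norm_of_nonneg (gridShift_nonneg α)]
      exact gridShift_le α)
  refine ⟨T, ?_, hTx⟩
  rwa [show (1 : ℝ) + 2 / (1 / n) * (1 / n) = 3 by field_simp; norm_num,
    Real.toNNReal_ofNat] at hT

theorem exists_biLipschitz_gridPoint_eq (hn : 0 < n)
    (z : (Fin (m + 1) → Fin n) → EuclideanSpace ℝ (Fin (m + 1))) {δ C₁ C₂ : ℝ} (hδ : 0 < δ)
    (hC₁ : 0 ≤ C₁) (hC₂ : 0 ≤ C₂)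
    (hz : Pairwise fun α β => δ ≤ dist (z α - coordProj 0 (z α)) (z β - coordProj 0 (z β)))
    (h₁ : ∀ α, ‖(z α - gridPoint (m + 1) n α) - coordProj 0 (z α - gridPoint (m + 1) n α)‖ ≤ C₁)
    (h₂ : ∀ α, |z α 0 - gridPoint (m + 1) n α 0| ≤ C₂) :
    ∃ T : EuclideanSpace ℝ (Fin (m + 1)) ≃ EuclideanSpace ℝ (Fin (m + 1)),
      BiLipschitzWith ((1 + 2 / δ * (C₂ + 1 / n)) * (1 + 2 * n ^ (m + 1) * C₁) * 3).toNNReal T ∧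
      ∀ α, T (gridPoint (m + 1) n α) = z α := by
  have hN : (0 : ℝ) < (n : ℝ) ^ (m + 1) := by positivity
  let u := fun α => gridPoint (m + 1) n α + EuclideanSpace.single 0 (gridShift α)
  obtain ⟨T₁, hT₁, hT₁x⟩ := exists_biLipschitz_gridPoint_add_gridShift (m := m) hn
  have hu : Pairwise fun α β =>
      1 / (n : ℝ) ^ (m + 1) ≤ dist (coordProj 0 (u α)) (coordProj 0 (u β)) := by
    intro α β hne
    simp only [u, coordProj_apply, PiLp.add_apply, PiLp.single_apply, if_true,
      gridPoint_zero_add_gridShift, PiLp.dist_single_same, Real.dist_eq]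
    exact one_div_le_abs_natCast_div_sub hN fun h => hne (gridCode.injective (Fin.ext h))
  have huz₁ : ∀ α, ‖(z α - u α) - coordProj 0 (z α - u α)‖ ≤ C₁ := by
    intro α
    convert h₁ α using 2
    ext j
    simp only [u, PiLp.sub_apply, PiLp.add_apply, PiLp.single_apply]
    split_ifs <;> simp_all
  have huz₂ : ∀ α, ‖coordProj 0 (z α - u α)‖ ≤ C₂ + 1 / n := by
    intro α
    rw [coordProj_apply, PiLp.norm_single, Real.norm_eq_abs]
    simp only [u, PiLp.sub_apply, PiLp.add_apply, PiLp.single_apply, if_true]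
    calc |z α 0 - (gridPoint (m + 1) n α 0 + gridShift α)|
        ≤ |z α 0 - gridPoint (m + 1) n α 0| + |gridShift α| := by
          rw [← sub_sub]; exact abs_sub _ _
      _ ≤ C₂ + 1 / n := by
          rw [abs_of_nonneg (gridShift_nonneg α)]; exact add_le_add (h₂ α) (gridShift_le α)
  have hC₂' : 0 ≤ C₂ + 1 / (n : ℝ) := by positivity
  have key := exists_biLipschitz_interpolating (coordProj 0) (coordProj_coordProj 0)
    (norm_coordProj_le 0) (norm_sub_coordProj_le 0) u z (one_div_pos.2 hN) hδ hC₁ hC₂'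
  obtain ⟨T₂, hT₂, hT₂u⟩ := key hu hz huz₁ huz₂
  rw [show (2 : ℝ) / (1 / (n : ℝ) ^ (m + 1)) * C₁ = 2 * n ^ (m + 1) * C₁ by field_simp] at hT₂
  refine ⟨T₁.trans T₂, ?_, fun α => by simp [hT₁x, hT₂u, u]⟩
  rw [Real.toNNReal_mul (by positivity), Real.toNNReal_ofNat]
  exact hT₁.trans hT₂

end Grid

lemma interpolation_constant_le {n N M ε : ℝ} (hn : 2 ≤ n) (hnN : n ≤ N) (hM : 0 ≤ M)
    (hε : 0 < ε) :
    (1 + 2 / (ε / (3 * N)) * (M + 1 / n)) * (1 + 2 * N * (M + ε / 3)) * 3 ≤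
      n / (n - 1) * (1 + 6 * N * (M + 1 / n)) * (1 + 2 * N * ε) *
        (1 + 6 * N * ε⁻¹ * (M + 1 / n)) := by
  have hN : 0 < N := by linarith
  have hNn : 1 ≤ N * (1 / n) := by rw [mul_one_div, le_div_iff₀ (by linarith)]; linarith
  have hfirst : 2 / (ε / (3 * N)) * (M + 1 / n) = 6 * N * ε⁻¹ * (M + 1 / n) := by
    field_simp; ring
  have hmid : (1 + 2 * N * (M + ε / 3)) * 3 ≤ (1 + 6 * N * (M + 1 / n)) * (1 + 2 * N * ε) := by
    have : 0 ≤ N * (M + 1 / n) * ε := by positivity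
    nlinarith
  have hfrac : 1 ≤ n / (n - 1) := by rw [le_div_iff₀ (by linarith)]; linarith
  rw [hfirst, mul_assoc]
  calc (1 + 6 * N * ε⁻¹ * (M + 1 / n)) * ((1 + 2 * N * (M + ε / 3)) * 3)
      ≤ (1 + 6 * N * ε⁻¹ * (M + 1 / n)) *
          (1 * ((1 + 6 * N * (M + 1 / n)) * (1 + 2 * N * ε))) := by
        rw [one_mul]; gcongr
    _ ≤ (1 + 6 * N * ε⁻¹ * (M + 1 / n)) *
          (n / (n - 1) * ((1 + 6 * N * (M + 1 / n)) * (1 + 2 * N * ε))) := by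
        gcongr
    _ = _ := by ring

theorem exists_biLipschitz_gridPoint_near {m n : ℕ} (hn : 0 < n)
    (y : (Fin (m + 2) → Fin n) → EuclideanSpace ℝ (Fin (m + 2))) {M ε : ℝ} (hM : 0 ≤ M)
    (hyM : ∀ α, ‖y α - gridPoint (m + 2) n α‖ ≤ M) (hε : 0 < ε) :
    ∃ T : EuclideanSpace ℝ (Fin (m + 2)) ≃ EuclideanSpace ℝ (Fin (m + 2)),
      BiLipschitzWith ((1 + 2 / (ε / (3 * n ^ (m + 2))) * (M + 1 / n)) *
        (1 + 2 * n ^ (m + 2) * (M + ε / 3)) * 3).toNNReal T ∧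
      ∀ α, ‖T (gridPoint (m + 2) n α) - y α‖ < ε := by
  have hN : (0 : ℝ) < (n : ℝ) ^ (m + 2) := by positivity
  set δ := ε / (3 * (n : ℝ) ^ (m + 2))
  have hδ : 0 < δ := by positivity
  obtain ⟨k, hkN, hk⟩ := exists_rank_add_mul_separated (fun α => y α 1) hδ.le
  have hkδ : ∀ α, k α * δ < ε / 3 := by
    intro α
    have : (k α : ℝ) < (n : ℝ) ^ (m + 2) := by
      exact_mod_cast (hkN α).trans_eq (by simp)
    calc k α * δ < (n : ℝ) ^ (m + 2) * δ := by gcongr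
      _ = ε / 3 := by simp only [δ]; field_simp
  let z := fun α => y α + EuclideanSpace.single 1 (k α * δ)
  have h10 : (1 : Fin (m + 2)) ≠ 0 := by simp
  have hz : Pairwise fun α β => δ ≤ dist (z α - coordProj 0 (z α)) (z β - coordProj 0 (z β)) := by
    intro α β hαβ
    refine (hk hαβ).trans (le_of_eq_of_le ?_ (abs_sub_apply_le_dist _ _ 1))
    simp [z, h10]
  have h₁ : ∀ α, ‖(z α - gridPoint (m + 2) n α) - coordProj 0 (z α - gridPoint (m + 2) n α)‖ ≤
      M + ε / 3 := by
    intro α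
    refine (norm_sub_coordProj_le 0 _).trans ?_
    calc ‖z α - gridPoint (m + 2) n α‖
        = ‖(y α - gridPoint (m + 2) n α) + EuclideanSpace.single 1 (k α * δ)‖ := by
          simp only [z]; abel_nf
      _ ≤ M + ε / 3 := by
          refine (norm_add_le _ _).trans (add_le_add (hyM α) ?_)
          rw [PiLp.norm_single, Real.norm_of_nonneg (by positivity)]
          exact (hkδ α).le
  have h₂ : ∀ α, |z α 0 - gridPoint (m + 2) n α 0| ≤ M := by
    intro α
    have := (PiLp.norm_apply_le (y α - gridPoint (m + 2) n α) 0).trans (hyM α)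
    simpa [z, h10.symm] using this
  obtain ⟨T, hT, hTx⟩ := exists_biLipschitz_gridPoint_eq hn z hδ (by positivity) hM hz h₁ h₂
  refine ⟨T, hT, fun α => ?_⟩
  rw [hTx, add_sub_cancel_left, PiLp.norm_single, Real.norm_of_nonneg (by positivity)]
  linarith [hkδ α]

theorem inn_interpolation (d n : ℕ) (hd : 2 ≤ d) (hn : 2 ≤ n) (N : ℕ) (hN : N = n ^ d)
    (y : (Fin d → Fin n) → EuclideanSpace ℝ (Fin d))
    (c : ℝ) (hc : c = (⨆ α : Fin d → Fin n, ‖y α - gridPoint d n α‖) + 1 / (n : ℝ))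
    (ε : ℝ) (hε : 0 < ε) :
    ∃ G Ginv : EuclideanSpace ℝ (Fin d) → EuclideanSpace ℝ (Fin d),
      Function.LeftInverse Ginv G ∧ Function.RightInverse Ginv G ∧
      (∀ α : Fin d → Fin n, ‖G (gridPoint d n α) - y α‖ < ε) ∧
      LipschitzWith (Real.toNNReal (((n : ℝ) / ((n : ℝ) - 1)) * (1 + 6 * (N : ℝ) * c) *
        (1 + 2 * (N : ℝ) * ε) * (1 + 6 * (N : ℝ) * ε⁻¹ * c))) G ∧
      LipschitzWith (Real.toNNReal (((n : ℝ) / ((n : ℝ) - 1)) * (1 + 6 * (N : ℝ) * c) *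
        (1 + 2 * (N : ℝ) * ε) * (1 + 6 * (N : ℝ) * ε⁻¹ * c))) Ginv := by
  obtain ⟨m, rfl⟩ : ∃ m, d = m + 2 := ⟨d - 2, by omega⟩
  subst hN hc
  set M := ⨆ α : Fin (m + 2) → Fin n, ‖y α - gridPoint (m + 2) n α‖
  have hM : 0 ≤ M := Real.iSup_nonneg fun α => norm_nonneg _
  have hyM : ∀ α, ‖y α - gridPoint (m + 2) n α‖ ≤ M :=
    le_ciSup (Set.finite_range fun α => ‖y α - gridPoint (m + 2) n α‖).bddAbove
  obtain ⟨T, hT, hTy⟩ := exists_biLipschitz_gridPoint_near (by omega) y hM hyM hε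
  have hnN : (n : ℝ) ≤ (n : ℝ) ^ (m + 2) := by exact_mod_cast Nat.le_self_pow (by omega) n
  have hK := Real.toNNReal_le_toNNReal (interpolation_constant_le (by exact_mod_cast hn) hnN hM hε)
  push_cast
  exact ⟨T, T.symm, T.left_inv, T.right_inv, hTy, (hT.weaken hK).1, (hT.weaken hK).2⟩
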